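/- If D is a hook diagram, then its Kohnert poset P(D) is bounded; in particular, for D = H(r_1,r_2;C), the unique minimal element of P(D) is H(1, r_2−r_1+1; C). -/

import Mathlib

namespace KohnertPaper

abbrev Diagram := Finset (ℕ × ℕ)

/-- `D'` is obtained from `D` by a single Kohnert move: the rightmost cell `(r,c)` of row `r`
moves down its column to the first empty position `(r',c)` below it. -/
def KMove (D D' : Diagram) : Prop :=
  ∃ r c r' : ℕ, 1 ≤ r' ∧ r' < r ∧ (r, c) ∈ D ∧
    (∀ c', c < c' → (r, c') ∉ D) ∧
    (r', c) ∉ D ∧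
    (∀ r₁, r' < r₁ → r₁ < r → (r₁, c) ∈ D) ∧
    D' = insert (r', c) (D.erase (r, c))

/-- `KReach D T` : `T` is obtainable from `D` by a (possibly empty) sequence of Kohnert moves. -/
def KReach : Diagram → Diagram → Prop := Relation.ReflTransGen KMove

/-- The underlying set of the Kohnert poset of `D`. -/
def KD (D : Diagram) : Set Diagram := {T | KReach D T}

/-- The order of the Kohnert poset: `X ⪯ Y` iff `X` is obtainable from `Y` by Kohnert moves. -/
def KLe (X Y : Diagram) : Prop := KReach Y X

variable {α : Type*}

/-- A chain of the poset `(P, le)`, i.e. a face of the order complex. -/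
def IsPChain (le : α → α → Prop) (P : Set α) (s : Finset α) : Prop :=
  ↑s ⊆ P ∧ ∀ x ∈ s, ∀ y ∈ s, le x y ∨ le y x

/-- A facet of the order complex of `(P, le)`: a maximal chain. -/
def IsFacet (le : α → α → Prop) (P : Set α) (s : Finset α) : Prop :=
  IsPChain le P s ∧ ∀ t : Finset α, IsPChain le P t → s ⊆ t → s = t

/-- Shellability of the order complex of the poset `(P, le)`: there is an ordering
`F_0, …, F_{t-1}` of all its facets such that for each `k ≥ 1` the complex
`(⋃_{i<k} F̄_i) ∩ F̄_k` is pure of dimension `dim F_k − 1`. -/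
def Shellable (le : α → α → Prop) (P : Set α) : Prop :=
  ∃ L : List (Finset α), L.Nodup ∧ (∀ s, IsFacet le P s ↔ s ∈ L) ∧
    ∀ k : Fin L.length, 1 ≤ (k : ℕ) →
      ∀ σ : Finset α, σ ⊆ L.get k →
        (∃ i : Fin L.length, (i : ℕ) < (k : ℕ) ∧ σ ⊆ L.get i) →
        ∃ τ : Finset α, σ ⊆ τ ∧ τ ⊆ L.get k ∧
          (∃ i : Fin L.length, (i : ℕ) < (k : ℕ) ∧ τ ⊆ L.get i) ∧
          τ.card + 1 = (L.get k).card

/-- A poset is pure if all facets of its order complex have the same cardinality. -/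
def Pure (le : α → α → Prop) (P : Set α) : Prop :=
  ∀ s t : Finset α, IsFacet le P s → IsFacet le P t → s.card = t.card

/-- A poset is bounded if it has a unique minimal and a unique maximal element. -/
def Bounded (le : α → α → Prop) (P : Set α) : Prop :=
  (∃ m ∈ P, ∀ x ∈ P, le m x) ∧ ∃ M ∈ P, ∀ x ∈ P, le x M

/-- `y` covers `x` in the poset `(P, le)`. -/
def CoversIn (le : α → α → Prop) (P : Set α) (x y : α) : Prop :=
  x ∈ P ∧ y ∈ P ∧ le x y ∧ x ≠ y ∧ ∀ z ∈ P, le x z → le z y → z = x ∨ z = y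

/-- The closed interval `[x,y]` of `(P, le)`. -/
def intervalSet (le : α → α → Prop) (P : Set α) (x y : α) : Set α :=
  {z ∈ P | le x z ∧ le z y}

/-- A saturated (maximal) chain of the interval `[x,y]`, recorded as a list going
from `x` up to `y` through covering relations of the interval. -/
def IsSatChain (le : α → α → Prop) (P : Set α) (x y : α) (c : List α) : Prop :=
  c ≠ [] ∧ c.head? = some x ∧ c.getLast? = some y ∧
    List.Chain' (CoversIn le (intervalSet le P x y)) c

/-- The word of edge labels along a chain. -/
def labelWord (lab : α → α → ℤ) (c : List α) : List ℤ :=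
  (c.zip c.tail).map fun p => lab p.1 p.2

/-- EL-shellability: there is an integer edge labeling such that every interval `[x,y]`
has a unique rising maximal chain, which is lexicographically strictly smaller than every
other maximal chain of the interval. -/
def ELShellable (le : α → α → Prop) (P : Set α) : Prop :=
  ∃ lab : α → α → ℤ,
    ∀ x ∈ P, ∀ y ∈ P, le x y →
      ∃ c : List α, IsSatChain le P x y c ∧
        List.Pairwise (· ≤ ·) (labelWord lab c) ∧
        (∀ c', IsSatChain le P x y c' → List.Pairwise (· ≤ ·) (labelWord lab c') → c' = c) ∧
        ∀ c', IsSatChain le P x y c' → c' ≠ c →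
          List.Lex (· < ·) (labelWord lab c) (labelWord lab c')

/-- The diagram `H(r₁,r₂;C)`. -/
def hookSeed (r1 r2 : ℕ) (C : Finset ℕ) (hC : C.Nonempty) : Diagram :=
  C.image (fun c => (r2, c)) ∪ (Finset.Icc r1 r2).image fun j => (j, C.max' hC)

/-- A hook diagram: a diagram obtainable from some `H(r₁,r₂;C)` by Kohnert moves. -/
def IsHookDiagram (D : Diagram) : Prop :=
  ∃ (r1 r2 : ℕ) (C : Finset ℕ) (hC : C.Nonempty),
    1 ≤ r1 ∧ r1 ≤ r2 ∧ (∀ c ∈ C, 1 ≤ c) ∧ KReach (hookSeed r1 r2 C hC) D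

/-- The key diagram of the weak composition `(a 1, …, a n)`. -/
def keyDiagram (n : ℕ) (a : ℕ → ℕ) : Diagram :=
  (Finset.Icc 1 n).biUnion fun i => (Finset.Icc 1 (a i)).image fun j => (i, j)

/-- Number of cells of `T` in row `r`. -/
def rowCount (T : Diagram) (r : ℕ) : ℕ := (T.filter fun p => p.1 = r).card

/-- The Kohnert polynomial of `D` is multiplicity free iff distinct diagrams of `KD(D)`
have distinct weights (row-count vectors). -/
def MultFree (D : Diagram) : Prop :=
  ∀ T1 ∈ KD D, ∀ T2 ∈ KD D, (∀ r, rowCount T1 r = rowCount T2 r) → T1 = T2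

/-- The key diagram of a weak composition given as a list. -/
def keyDiagramL (l : List ℕ) : Diagram := keyDiagram l.length fun i => l.getD (i - 1) 0

/-! Every diagram reachable from `H(r₁,r₂;C)` keeps the shape of a hook: with `c_m = max C`,
column `c_m` holds `s = r₂ - r₁ + 1` cells, every other column of `C` exactly one, and no cell
of column `c_m` lies above a cell of another column. Such a diagram is either `H(1,s;C)` or admits a
Kohnert move: either column `c_m` has a gap below its top cell, or some row above `s` is nonempty
and its rightmost cell can drop by one row. Kohnert moves strictly decrease the sum of the row
indices, so every diagram of the poset reaches `H(1,s;C)`. -/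

theorem reflTransGen_of_invariant_of_measure {R : α → α → Prop} {P : α → Prop} {b : α}
    (f : α → ℕ) (hf : ∀ x y, R x y → f y < f x) (hP : ∀ x y, P x → R x y → P y)
    (hstep : ∀ x, P x → x = b ∨ ∃ y, R x y) {x : α} (hx : P x) :
    Relation.ReflTransGen R x b := by
  induction hn : f x using Nat.strong_induction_on generalizing x with
  | _ n ih =>
    rcases hstep x hx with rfl | ⟨y, hy⟩
    · exact .refl
    · exact .head hy (ih (f y) (hn ▸ hf x y hy) (hP x y hx hy) rfl)

section
open Finset

variable {T T' : Diagram}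

def weight (T : Diagram) : ℕ := ∑ p ∈ T, p.1

def column (T : Diagram) (c : ℕ) : Finset ℕ := (T.filter (·.2 = c)).image Prod.fst

@[simp]
lemma mem_column {c j : ℕ} : j ∈ column T c ↔ (j, c) ∈ T := by
  simp [column]

lemma KMove.weight_lt (h : KMove T T') : weight T' < weight T := by
  obtain ⟨r, c, r', -, hr', hmem, -, hnot, -, rfl⟩ := h
  have := sum_erase_add T (fun p : ℕ × ℕ => p.1) hmem
  rw [weight, sum_insert (fun h => hnot (mem_of_mem_erase h)), weight]
  omega

lemma KMove.card_column (h : KMove T T') (d : ℕ) : #(column T' d) = #(column T d) := by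
  obtain ⟨r, c, r', -, -, hmem, -, hnot, -, rfl⟩ := h
  by_cases hd : d = c
  · subst hd
    have hcol :
        column (insert (r', d) (T.erase (r, d))) d = insert r' ((column T d).erase r) := by
      ext j
      simp
    have hr : r ∈ column T d := mem_column.2 hmem
    rw [hcol, card_insert_of_notMem (by simp [hnot]), card_erase_of_mem hr]
    have := card_pos.2 ⟨r, hr⟩
    omega
  · congr 1
    ext j
    simp [hd]

lemma exists_kMove_of_gap {r c j : ℕ} (hrc : (r, c) ∈ T) (hright : ∀ c', c < c' → (r, c') ∉ T)
    (hj : 1 ≤ j) (hjr : j < r) (hjc : (j, c) ∉ T) : ∃ T', KMove T T' := by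
  obtain ⟨g, hg, hgmax⟩ := exists_max_image ((Ico j r).filter fun i => (i, c) ∉ T) id
    ⟨j, mem_filter.2 ⟨mem_Ico.2 ⟨le_rfl, hjr⟩, hjc⟩⟩
  simp only [mem_filter, mem_Ico, id] at hg hgmax
  refine ⟨_, r, c, g, by omega, hg.1.2, hrc, hright, hg.2, fun i hgi hir => ?_, rfl⟩
  by_contra hic
  have := hgmax i ⟨⟨by omega, hir⟩, hic⟩
  omega

lemma exists_rightmost_of_mem {r c : ℕ} (h : (r, c) ∈ T) :
    ∃ c', (r, c') ∈ T ∧ ∀ c'', c' < c'' → (r, c'') ∉ T := by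
  obtain ⟨p, hp, hpmax⟩ := exists_max_image (T.filter (·.1 = r)) Prod.snd
    ⟨(r, c), mem_filter.2 ⟨h, rfl⟩⟩
  obtain ⟨hpT, rfl⟩ := mem_filter.1 hp
  exact ⟨p.2, hpT, fun c'' hc'' hT =>
    absurd (hpmax _ (mem_filter.2 ⟨hT, rfl⟩)) (not_le.2 hc'')⟩

lemma mem_hookSeed {r1 r2 : ℕ} {C : Finset ℕ} {hC : C.Nonempty} {i c : ℕ} :
    (i, c) ∈ hookSeed r1 r2 C hC ↔ (i = r2 ∧ c ∈ C) ∨ (r1 ≤ i ∧ i ≤ r2 ∧ c = C.max' hC) := by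
  simp only [hookSeed, mem_union, mem_image, mem_Icc, Prod.mk.injEq]
  grind

structure IsHookShape (C : Finset ℕ) (hC : C.Nonempty) (s : ℕ) (T : Diagram) : Prop where
  mem : ∀ p ∈ T, p.2 ∈ C
  one_le : ∀ p ∈ T, 1 ≤ p.1
  card_column_max : #(column T (C.max' hC)) = s
  card_column : ∀ c ∈ C, c ≠ C.max' hC → #(column T c) = 1
  le_of_ne_max : ∀ i j c, (i, C.max' hC) ∈ T → (j, c) ∈ T → c ≠ C.max' hC → i ≤ j

variable {C : Finset ℕ} {hC : C.Nonempty} {s : ℕ}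

lemma isHookShape_hookSeed {r1 r2 : ℕ} (h1 : 1 ≤ r1) (h12 : r1 ≤ r2) :
    IsHookShape C hC (r2 - r1 + 1) (hookSeed r1 r2 C hC) where
  mem p hp := by
    rcases mem_hookSeed.1 hp with ⟨-, h⟩ | ⟨-, -, h⟩
    · exact h
    · exact h ▸ C.max'_mem hC
  one_le p hp := by
    rcases mem_hookSeed.1 hp with ⟨h, -⟩ | ⟨h, -⟩ <;> omega
  card_column_max := by
    have : column (hookSeed r1 r2 C hC) (C.max' hC) = Icc r1 r2 := by
      ext j
      simp only [mem_column, mem_hookSeed, mem_Icc]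
      grind
    rw [this, Nat.card_Icc]
    omega
  card_column c hc hne := by
    have : column (hookSeed r1 r2 C hC) c = {r2} := by
      ext j
      simp only [mem_column, mem_hookSeed, mem_singleton]
      grind
    rw [this, card_singleton]
  le_of_ne_max i j c hi hj hc := by
    rcases mem_hookSeed.1 hi with ⟨rfl, -⟩ | ⟨-, hi, -⟩ <;>
      rcases mem_hookSeed.1 hj with ⟨rfl, -⟩ | ⟨-, -, rfl⟩ <;> omega

namespace IsHookShape

variable (hT : IsHookShape C hC s T)
include hT

lemma eq_of_mem_column {c i j : ℕ} (hc : c ∈ C) (hne : c ≠ C.max' hC) (hi : (i, c) ∈ T)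
    (hj : (j, c) ∈ T) : i = j :=
  card_le_one.1 (hT.card_column c hc hne).le i (mem_column.2 hi) j (mem_column.2 hj)

lemma kMove (h : KMove T T') : IsHookShape C hC s T' := by
  obtain ⟨r, c, r', hr', hr'r, hrc, hright, -, hbetween, rfl⟩ := id h
  have hcases : ∀ {p}, p ∈ insert (r', c) (T.erase (r, c)) → p = (r', c) ∨ p ∈ T := fun hp =>
    (mem_insert.1 hp).imp_right mem_of_mem_erase
  have hcC := hT.mem _ hrc
  refine ⟨fun p hp => ?_, fun p hp => ?_, ?_, fun d hd hne => ?_, fun i j d hi hj hd => ?_⟩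
  · rcases hcases hp with rfl | hp
    exacts [hcC, hT.mem p hp]
  · rcases hcases hp with rfl | hp
    exacts [hr', hT.one_le p hp]
  · rw [h.card_column, hT.card_column_max]
  · rw [h.card_column, hT.card_column d hd hne]
  rcases hcases hi with hi' | hiT <;> rcases hcases hj with hj' | hjT
  · simp only [Prod.mk.injEq] at hi' hj'
    exact absurd (hi'.2.trans hj'.2.symm) (Ne.symm hd)
  · simp only [Prod.mk.injEq] at hi'
    obtain ⟨rfl, rfl⟩ := hi'
    have := hT.le_of_ne_max _ _ _ hrc hjT hd
    omega
  · -- a drop below row `i` would need `(i, d) ∈ T`, a second cell in the column of the moved cell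
    simp only [Prod.mk.injEq] at hj'
    obtain ⟨rfl, rfl⟩ := hj'
    have hir := hT.le_of_ne_max _ _ _ hiT hrc hd
    have hi_ne : i ≠ r := by
      rintro rfl
      exact hright _ (lt_of_le_of_ne (C.le_max' _ hcC) hd) hiT
    by_contra! hlt
    exact hi_ne (hT.eq_of_mem_column hcC hd (hbetween i hlt (by omega)) hrc)
  · exact hT.le_of_ne_max i j d hiT hjT hd

lemma column_max_eq_or_exists_kMove :
    column T (C.max' hC) = Icc 1 s ∨ ∃ T', KMove T T' := by
  by_cases hfull : Icc 1 s ⊆ column T (C.max' hC)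
  · exact .inl (eq_of_subset_of_card_le hfull (by simp [hT.card_column_max])).symm
  obtain ⟨j, hj, hjT⟩ := not_subset.1 hfull
  have hjs := mem_Icc.1 hj
  obtain ⟨m, hm, hm'⟩ := exists_mem_notMem_of_card_lt_card (s := (Icc 1 s).erase j)
    (t := column T (C.max' hC)) (by rw [card_erase_of_mem hj, hT.card_column_max]; simp; omega)
  rw [mem_column] at hm hjT
  have hm1 := hT.one_le _ hm
  have hms : m ∉ Icc 1 s := fun h => hm' (mem_erase.2 ⟨by rintro rfl; exact hjT hm, h⟩)
  have hjm : j < m := by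
    rw [mem_Icc] at hms
    omega
  exact .inr <| exists_kMove_of_gap hm
    (fun c' hc' hc'T => absurd (C.le_max' _ (hT.mem _ hc'T)) (not_le.2 hc')) hjs.1 hjm hjT

lemma eq_hookSeed (hs : 1 ≤ s) (hcol : column T (C.max' hC) = Icc 1 s)
    (hrow : ∀ p ∈ T, p.2 ≠ C.max' hC → p.1 = s) : T = hookSeed 1 s C hC := by
  have hmax {i : ℕ} : (i, C.max' hC) ∈ T ↔ 1 ≤ i ∧ i ≤ s := by rw [← mem_column, hcol, mem_Icc]
  ext ⟨i, c⟩
  rw [mem_hookSeed]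
  constructor
  · intro h
    by_cases hc : c = C.max' hC
    · subst hc
      exact .inr ⟨(hmax.1 h).1, (hmax.1 h).2, rfl⟩
    · exact .inl ⟨hrow _ h hc, hT.mem _ h⟩
  rintro (⟨rfl, hc⟩ | ⟨h1, h2, rfl⟩)
  · by_cases hcm : c = C.max' hC
    · exact hcm ▸ hmax.2 ⟨hs, le_rfl⟩
    obtain ⟨j, hj⟩ := card_eq_one.1 (hT.card_column c hc hcm)
    have hjT : (j, c) ∈ T := mem_column.1 (hj ▸ mem_singleton_self j)
    rwa [← hrow _ hjT hcm]
  · exact hmax.2 ⟨h1, h2⟩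

lemma eq_hookSeed_or_exists_kMove (hs : 1 ≤ s) : T = hookSeed 1 s C hC ∨ ∃ T', KMove T T' := by
  refine (hT.column_max_eq_or_exists_kMove).elim (fun hcol => ?_) .inr
  by_cases hrow : ∀ p ∈ T, p.2 ≠ C.max' hC → p.1 = s
  · exact .inl (hT.eq_hookSeed hs hcol hrow)
  push Not at hrow
  obtain ⟨⟨i, c⟩, hq, hc, hi⟩ := hrow
  have hsT : (s, C.max' hC) ∈ T := by simp [← mem_column, hcol, hs]
  have hsi : s < i := lt_of_le_of_ne (hT.le_of_ne_max _ _ _ hsT hq hc) (Ne.symm hi)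
  obtain ⟨c', hc'T, hright⟩ := exists_rightmost_of_mem hq
  have hc' : c' ≠ C.max' hC := by
    rintro rfl
    have := mem_Icc.1 (hcol ▸ mem_column.2 hc'T)
    omega
  refine .inr (exists_kMove_of_gap hc'T hright (by omega) (by omega : i - 1 < i) fun h => ?_)
  have := hT.eq_of_mem_column (hT.mem _ hc'T) hc' h hc'T
  omega

end IsHookShape

lemma kReach_hookSeed_one {r1 r2 : ℕ} (h1 : 1 ≤ r1) (h12 : r1 ≤ r2)
    (hT : KReach (hookSeed r1 r2 C hC) T) : KReach T (hookSeed 1 (r2 - r1 + 1) C hC) := by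
  have hshape : IsHookShape C hC (r2 - r1 + 1) T := by
    induction hT with
    | refl => exact isHookShape_hookSeed h1 h12
    | tail _ hmove ih => exact ih.kMove hmove
  exact reflTransGen_of_invariant_of_measure weight (fun _ _ h => h.weight_lt)
    (fun _ _ hx h => hx.kMove h) (fun _ hx => hx.eq_hookSeed_or_exists_kMove (by omega)) hshape

end

/-- The Kohnert poset of a hook diagram is bounded; in particular, for `D = H(r₁,r₂;C)` the
unique minimal element of `P(D)` is `H(1, r₂−r₁+1; C)`. -/
theorem stmt_8 :
    (∀ D : Diagram, IsHookDiagram D → Bounded KLe (KD D)) ∧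
    (∀ (r1 r2 : ℕ) (C : Finset ℕ) (hC : C.Nonempty),
      1 ≤ r1 → r1 ≤ r2 → (∀ c ∈ C, 1 ≤ c) →
      hookSeed 1 (r2 - r1 + 1) C hC ∈ KD (hookSeed r1 r2 C hC) ∧
        ∀ T ∈ KD (hookSeed r1 r2 C hC), KReach T (hookSeed 1 (r2 - r1 + 1) C hC)) := by
  constructor
  · rintro D ⟨r1, r2, C, hC, h1, h12, -, hD⟩
    exact ⟨⟨_, kReach_hookSeed_one h1 h12 hD,
        fun T hT => kReach_hookSeed_one h1 h12 (hD.trans hT)⟩,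
      ⟨D, .refl, fun T hT => hT⟩⟩
  · intro r1 r2 C hC h1 h12 _
    exact ⟨kReach_hookSeed_one h1 h12 .refl, fun T hT => kReach_hookSeed_one h1 h12 hT⟩

end KohnertPaper
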